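/- The mean chord length μ_N = 2^{N-1}·B(N/2, N/2)/B(N - 1/2, 1/2) of the unit sphere S^{N-1} satisfies lim_{N→∞} μ_N = √2, and consequently the variance of the chord length tends to 0 as N → ∞. -/

import Mathlib

/-!
With `B(a, b) = Γ(a)Γ(b)/Γ(a + b)` and Legendre's duplication formula,
`μ_N = Γ(N/2)Γ(N) / (Γ(N/2 + 1/2)Γ(N - 1/2))`. Log-convexity of `Γ` gives Wendel's limit
`Γ(x + a) / (Γ(x) x^a) → 1`, so `μ_N` behaves like `√(N - 1/2) / √(N/2) → √2`.

For the variance let `Y = ‖X - p‖` and `t = ⟪X, p⟫`, so that `Y² = 2 - 2t`. Then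
`|Y - √2| = |Y² - 2| / (Y + √2) ≤ √2 |t|`, hence `Var Y ≤ E[(Y - √2)²] ≤ 2 E[t²] = 2/N`: by rotation
invariance `E[⟪X, v⟫²]` is the same for all unit vectors `v`, and over an orthonormal basis these
add up to `E‖X‖² = 1`.
-/

open MeasureTheory Metric

/-- The uniform (normalized surface) probability measure on the unit sphere of
`ℝ^N`, viewed as a measure on the ambient space. -/
noncomputable def uniformOnSphere (N : ℕ) : Measure (EuclideanSpace ℝ (Fin N)) :=
  (((volume : Measure (EuclideanSpace ℝ (Fin N))).toSphere Set.univ)⁻¹ •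
    (volume : Measure (EuclideanSpace ℝ (Fin N))).toSphere).map Subtype.val

/-- The (incomplete) Euler beta integral `B(x; a, b)`. -/
noncomputable def incBeta (x a b : ℝ) : ℝ :=
  ∫ t in (0:ℝ)..x, t ^ (a - 1) * (1 - t) ^ (b - 1)

/-- The Euler Beta function `B(a,b) = B(1; a, b)`. -/
noncomputable def betaFn (a b : ℝ) : ℝ := incBeta 1 a b

/-- The regularized incomplete beta function `I_x(a,b)`. -/
noncomputable def regIncBeta (x a b : ℝ) : ℝ := incBeta x a b / betaFn a b

open Filter Real Set Topology Pointwise ProbabilityTheory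
open scoped RealInnerProductSpace

namespace Real

theorem Gamma_add_le_Gamma_mul_rpow {x a : ℝ} (hx : 0 < x) (ha : 0 < a) (ha1 : a < 1) :
    Gamma (x + a) ≤ Gamma x * x ^ a := by
  have hΓ : 0 < Gamma x := Gamma_pos_of_pos hx
  calc Gamma (x + a) = Gamma ((1 - a) * x + a * (x + 1)) := by ring_nf
    _ ≤ Gamma x ^ (1 - a) * Gamma (x + 1) ^ a :=
      Gamma_mul_add_mul_le_rpow_Gamma_mul_rpow_Gamma hx (by linarith) (by linarith) ha
        (by ring)
    _ = Gamma x * x ^ a := by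
      rw [Gamma_add_one hx.ne', mul_comm x, mul_rpow hΓ.le hx.le, ← mul_assoc,
        ← rpow_add hΓ, sub_add_cancel, rpow_one]

theorem Gamma_add_one_le_Gamma_add_mul_rpow {x a : ℝ} (hx : 0 < x) (ha : 0 < a) (ha1 : a < 1) :
    Gamma (x + 1) ≤ Gamma (x + a) * (x + a) ^ (1 - a) := by
  have hxa : 0 < x + a := by linarith
  have hΓ : 0 < Gamma (x + a) := Gamma_pos_of_pos hxa
  calc Gamma (x + 1) = Gamma (a * (x + a) + (1 - a) * (x + a + 1)) := by ring_nf
    _ ≤ Gamma (x + a) ^ a * Gamma (x + a + 1) ^ (1 - a) :=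
      Gamma_mul_add_mul_le_rpow_Gamma_mul_rpow_Gamma hxa (by linarith) ha (by linarith)
        (by ring)
    _ = Gamma (x + a) * (x + a) ^ (1 - a) := by
      rw [Gamma_add_one hxa.ne', mul_comm (x + a), mul_rpow hΓ.le hxa.le, ← mul_assoc,
        ← rpow_add hΓ, add_sub_cancel, rpow_one]

theorem tendsto_Gamma_add_div_Gamma_mul_rpow {a : ℝ} (ha : 0 < a) (ha1 : a < 1) :
    Tendsto (fun x => Gamma (x + a) / (Gamma x * x ^ a)) atTop (𝓝 1) := by
  have hlower : Tendsto (fun x => (x / (x + a)) ^ (1 - a)) atTop (𝓝 1) := by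
    have hinv : Tendsto (fun x => (1 + a * x⁻¹)⁻¹) atTop (𝓝 1) := by
      simpa using ((tendsto_inv_atTop_zero.const_mul a).const_add 1).inv₀ (by simp)
    have hfrac : Tendsto (fun x => x / (x + a)) atTop (𝓝 1) := by
      refine hinv.congr' ?_
      filter_upwards [eventually_gt_atTop 0] with x hx
      field_simp
    simpa using hfrac.rpow_const (Or.inl one_ne_zero)
  refine tendsto_of_tendsto_of_tendsto_of_le_of_le' hlower tendsto_const_nhds ?_ ?_
  · filter_upwards [eventually_gt_atTop 0] with x hx
    have hxa : 0 < x + a := by linarith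
    have h := Gamma_add_one_le_Gamma_add_mul_rpow hx ha ha1
    rw [Gamma_add_one hx.ne'] at h
    have hx1 : x ^ (1 - a) * x ^ a = x := by rw [← rpow_add hx, sub_add_cancel, rpow_one]
    rw [le_div_iff₀ (by have := Gamma_pos_of_pos hx; positivity), div_rpow hx.le hxa.le,
      div_mul_eq_mul_div, div_le_iff₀ (by positivity)]
    linear_combination Gamma x * hx1 + h
  · filter_upwards [eventually_gt_atTop 0] with x hx
    rw [div_le_one (by have := Gamma_pos_of_pos hx; positivity)]
    exact Gamma_add_le_Gamma_mul_rpow hx ha ha1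

end Real

theorem betaFn_eq_Gamma_mul_Gamma_div_Gamma {a b : ℝ} (ha : 0 < a) (hb : 0 < b) :
    betaFn a b = Gamma a * Gamma b / Gamma (a + b) := by
  have hbeta : Complex.betaIntegral a b = (betaFn a b : ℂ) := by
    rw [betaFn, incBeta, Complex.betaIntegral, ← intervalIntegral.integral_ofReal]
    refine intervalIntegral.integral_congr fun t ht => ?_
    rw [Set.uIcc_of_le zero_le_one] at ht
    simp only [Complex.ofReal_mul, Complex.ofReal_cpow ht.1,
      Complex.ofReal_cpow (sub_nonneg.2 ht.2)]
    push_cast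
    ring
  have h := Complex.Gamma_mul_Gamma_eq_betaIntegral (s := a) (t := b) (by simpa) (by simpa)
  rw [hbeta, ← Complex.ofReal_add, Complex.Gamma_ofReal, Complex.Gamma_ofReal,
    Complex.Gamma_ofReal] at h
  have h' : Gamma a * Gamma b = Gamma (a + b) * betaFn a b := by exact_mod_cast h
  rw [h', mul_div_cancel_left₀ _ (Gamma_pos_of_pos (add_pos ha hb)).ne']

noncomputable def sphereChordMean (N : ℕ) : ℝ :=
  2 ^ (N - 1) * betaFn ((N : ℝ) / 2) ((N : ℝ) / 2) / betaFn ((N : ℝ) - 1 / 2) (1 / 2)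

theorem sphereChordMean_eq_Gamma {N : ℕ} (hN : 0 < N) :
    sphereChordMean N =
      Gamma (N / 2) * Gamma N / (Gamma (N / 2 + 1 / 2) * Gamma (N - 1 / 2)) := by
  have hN1 : (1 : ℝ) ≤ N := Nat.one_le_cast.2 hN
  have hdup := Gamma_mul_Gamma_add_half_of_pos (s := (N : ℝ) / 2) (by positivity)
  rw [mul_div_cancel₀ _ two_ne_zero] at hdup
  have hpow : (2 : ℝ) ^ (N - 1) * 2 ^ (1 - (N : ℝ)) = 1 := by
    rw [← rpow_natCast, Nat.cast_sub hN, ← rpow_add two_pos]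
    norm_num
  have hΓ : ∀ x : ℝ, 0 < x → Gamma x ≠ 0 := fun x hx => (Gamma_pos_of_pos hx).ne'
  rw [sphereChordMean, betaFn_eq_Gamma_mul_Gamma_div_Gamma (by positivity) (by positivity),
    betaFn_eq_Gamma_mul_Gamma_div_Gamma (by linarith) one_half_pos, add_halves,
    sub_add_cancel, Gamma_one_half_eq]
  have := hΓ N (by positivity)
  have := hΓ (N / 2 + 1 / 2) (by positivity)
  have := hΓ (N - 1 / 2) (by linarith)
  have := (sqrt_pos.2 pi_pos).ne'
  generalize Gamma (N / 2 + 1 / 2) = ΓC at *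
  generalize Gamma (N - 1 / 2) = ΓB at *
  field_simp
  linear_combination 2 ^ (N - 1) * hdup + Gamma N * √π * hpow

theorem tendsto_sphereChordMean : Tendsto sphereChordMean atTop (𝓝 (√2)) := by
  set R : ℝ → ℝ := fun x => Gamma (x + 1 / 2) / (Gamma x * √x) with hR_def
  have hR : Tendsto R atTop (𝓝 1) := by
    simpa only [hR_def, sqrt_eq_rpow] using
      tendsto_Gamma_add_div_Gamma_mul_rpow (a := 1 / 2) (by norm_num) (by norm_num)
  have hcast := tendsto_natCast_atTop_atTop (R := ℝ)
  have hsqrt : Tendsto (fun N : ℕ => √(2 - 1 / N)) atTop (𝓝 (√2)) := by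
    simpa using (tendsto_const_nhds.sub tendsto_one_div_atTop_nhds_zero_nat).sqrt
  have hlim := ((hR.comp (tendsto_atTop_add_const_right _ (-1 / 2) hcast)).div
    (hR.comp (hcast.atTop_div_const two_pos)) one_ne_zero).mul hsqrt
  rw [div_one, one_mul] at hlim
  refine hlim.congr' ?_
  filter_upwards [eventually_gt_atTop 0] with N hN
  have hN1 : (1 : ℝ) ≤ N := Nat.one_le_cast.2 hN
  have h2 : (2 : ℝ) - 1 / N = (N - 1 / 2) / (N / 2) := by field_simp
  have h3 : (N : ℝ) + -1 / 2 = N - 1 / 2 := by ring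
  simp only [hR_def, Pi.div_apply, Function.comp_apply]
  rw [sphereChordMean_eq_Gamma hN, h2, sqrt_div (by linarith : (0 : ℝ) ≤ N - 1 / 2), h3,
    sub_add_cancel]
  have hΓ : ∀ x : ℝ, 0 < x → Gamma x ≠ 0 := fun x hx => (Gamma_pos_of_pos hx).ne'
  have := hΓ N (by positivity)
  have := hΓ (N / 2) (by positivity)
  have := hΓ (N / 2 + 1 / 2) (by positivity)
  have := hΓ (N - 1 / 2) (by linarith)
  have := (sqrt_pos.2 (show (0 : ℝ) < N - 1 / 2 by linarith)).ne'
  have := (sqrt_pos.2 (show (0 : ℝ) < N / 2 by positivity)).ne'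
  generalize Gamma N = a, Gamma (N / 2) = b, Gamma (N / 2 + 1 / 2) = c, Gamma (N - 1 / 2) = d,
    √(N - 1 / 2) = s, √(N / 2) = t at *
  field_simp

theorem MeasureTheory.Measure.map_linearIsometryEquiv_map_toSphere {E : Type*}
    [NormedAddCommGroup E] [NormedSpace ℝ E] [MeasurableSpace E] [BorelSpace E] {μ : Measure E}
    (e : E ≃ₗᵢ[ℝ] E) (he : MeasurePreserving e μ μ) :
    (μ.toSphere.map (↑)).map e = μ.toSphere.map (↑) := by
  have hsmul : ∀ B : Set E, Ioo (0 : ℝ) 1 • (e ⁻¹' B) = e ⁻¹' (Ioo (0 : ℝ) 1 • B) := by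
    intro B
    ext x
    simp only [Set.mem_smul, Set.mem_preimage]
    constructor
    · rintro ⟨c, hc, y, hy, rfl⟩
      exact ⟨c, hc, e y, hy, (e.map_smul c y).symm⟩
    · rintro ⟨c, hc, z, hz, hx⟩
      refine ⟨c, hc, e.symm z, by simpa using hz, ?_⟩
      rw [← e.symm_apply_apply x, ← hx, e.symm.map_smul]
  ext A hA
  have heA : MeasurableSet (e ⁻¹' A) := e.continuous.measurable hA
  rw [Measure.map_apply e.continuous.measurable hA,
    Measure.map_apply measurable_subtype_coe heA, Measure.map_apply measurable_subtype_coe hA,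
    Measure.toSphere_apply' _ (measurable_subtype_coe heA),
    Measure.toSphere_apply' _ (measurable_subtype_coe hA),
    Subtype.image_preimage_coe, Subtype.image_preimage_coe]
  have hsphere : e ⁻¹' sphere (0 : E) 1 = sphere 0 1 := by
    rw [e.preimage_sphere, map_zero]
  -- the cone over `sphere ∩ e⁻¹' A` is the preimage under `e` of the cone over `sphere ∩ A`
  rw [← hsphere, ← preimage_inter, hsmul, hsphere]
  congr 1
  exact he.measure_preimage_equiv (f := e.toHomeomorph.toMeasurableEquiv) _

section UniformOnSphere

variable {N : ℕ}

instance [NeZero N] : IsProbabilityMeasure (uniformOnSphere N) := by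
  have : NeZero (volume : Measure (EuclideanSpace ℝ (Fin N))).toSphere :=
    ⟨Measure.toSphere_ne_zero _⟩
  exact Measure.isProbabilityMeasure_map measurable_subtype_coe.aemeasurable

theorem ae_mem_sphere_uniformOnSphere :
    ∀ᵐ x ∂uniformOnSphere N, x ∈ sphere (0 : EuclideanSpace ℝ (Fin N)) 1 := by
  have hS : MeasurableSet (sphere (0 : EuclideanSpace ℝ (Fin N)) 1) :=
    isClosed_sphere.measurableSet
  rw [← Subtype.range_coe (s := sphere (0 : EuclideanSpace ℝ (Fin N)) 1)] at hS ⊢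
  exact ae_map_mem_range _ hS _

theorem measurePreserving_uniformOnSphere
    (e : EuclideanSpace ℝ (Fin N) ≃ₗᵢ[ℝ] EuclideanSpace ℝ (Fin N)) :
    MeasurePreserving e (uniformOnSphere N) (uniformOnSphere N) := by
  refine ⟨e.continuous.measurable, ?_⟩
  rw [uniformOnSphere, Measure.map_smul, Measure.map_smul,
    Measure.map_linearIsometryEquiv_map_toSphere e e.measurePreserving]

theorem Continuous.memLp_uniformOnSphere [NeZero N] {F : Type*} [NormedAddCommGroup F]
    {f : EuclideanSpace ℝ (Fin N) → F} (hf : Continuous f) (p : ENNReal) :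
    MemLp f p (uniformOnSphere N) := by
  obtain ⟨C, hC⟩ :=
    (isCompact_sphere (0 : EuclideanSpace ℝ (Fin N)) 1).exists_bound_of_continuousOn hf.continuousOn
  exact .of_bound hf.aestronglyMeasurable C (ae_mem_sphere_uniformOnSphere.mono hC)

theorem Continuous.integrable_uniformOnSphere [NeZero N] {F : Type*} [NormedAddCommGroup F]
    {f : EuclideanSpace ℝ (Fin N) → F} (hf : Continuous f) : Integrable f (uniformOnSphere N) :=
  memLp_one_iff_integrable.1 (hf.memLp_uniformOnSphere 1)

theorem integral_inner_sq_uniformOnSphere_eq_of_norm_eq {p q : EuclideanSpace ℝ (Fin N)}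
    (h : ‖p‖ = ‖q‖) :
    ∫ x, ⟪x, p⟫ ^ 2 ∂uniformOnSphere N = ∫ x, ⟪x, q⟫ ^ 2 ∂uniformOnSphere N := by
  let R := (ℝ ∙ (p - q))ᗮ.reflection
  calc ∫ x, ⟪x, p⟫ ^ 2 ∂uniformOnSphere N = ∫ x, ⟪R x, R p⟫ ^ 2 ∂uniformOnSphere N := by
        simp only [LinearIsometryEquiv.inner_map_map]
    _ = ∫ x, ⟪R x, q⟫ ^ 2 ∂uniformOnSphere N := by rw [Submodule.reflection_sub h]
    _ = ∫ x, ⟪x, q⟫ ^ 2 ∂uniformOnSphere N :=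
        (measurePreserving_uniformOnSphere R).integral_comp
          R.toHomeomorph.measurableEmbedding (fun x => ⟪x, q⟫ ^ 2)

theorem integral_inner_sq_uniformOnSphere [NeZero N] {p : EuclideanSpace ℝ (Fin N)}
    (hp : ‖p‖ = 1) : ∫ x, ⟪x, p⟫ ^ 2 ∂uniformOnSphere N = 1 / N := by
  let b := EuclideanSpace.basisFun (Fin N) ℝ
  have hsum : ∑ i, ∫ x, ⟪x, b i⟫ ^ 2 ∂uniformOnSphere N = 1 := by
    rw [← integral_finsetSum _ fun i _ =>
      ((continuous_id.inner continuous_const).pow 2).integrable_uniformOnSphere]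
    calc ∫ x, ∑ i, ⟪x, b i⟫ ^ 2 ∂uniformOnSphere N = ∫ _, 1 ∂uniformOnSphere N := by
          refine integral_congr_ae (ae_mem_sphere_uniformOnSphere.mono fun x hx => ?_)
          simpa [real_inner_comm, mem_sphere_zero_iff_norm.1 hx] using b.sum_sq_norm_inner_right x
      _ = 1 := by simp
  have hb : ∀ i, ∫ x, ⟪x, b i⟫ ^ 2 ∂uniformOnSphere N = ∫ x, ⟪x, p⟫ ^ 2 ∂uniformOnSphere N :=
    fun i => integral_inner_sq_uniformOnSphere_eq_of_norm_eq (by rw [b.orthonormal.1 i, hp])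
  simp only [hb, Finset.sum_const, Finset.card_univ, Fintype.card_fin, nsmul_eq_mul] at hsum
  rw [eq_div_iff (Nat.cast_ne_zero.2 (NeZero.ne N)), mul_comm, hsum]

end UniformOnSphere

theorem sq_norm_sub_sub_sqrt_two_le {E : Type*} [NormedAddCommGroup E] [InnerProductSpace ℝ E]
    {x p : E} (hx : ‖x‖ = 1) (hp : ‖p‖ = 1) : (‖x - p‖ - √2) ^ 2 ≤ 2 * ⟪x, p⟫ ^ 2 := by
  have hchord : ‖x - p‖ ^ 2 = 2 - 2 * ⟪x, p⟫ := by rw [norm_sub_sq_real, hx, hp]; ring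
  have hsqrt : √2 ^ 2 = 2 := Real.sq_sqrt zero_le_two
  have hfactor : (‖x - p‖ - √2) ^ 2 * (‖x - p‖ + √2) ^ 2 = 4 * ⟪x, p⟫ ^ 2 := by
    linear_combination (‖x - p‖ ^ 2 - 2 - 2 * ⟪x, p⟫) * hchord -
      (2 * ‖x - p‖ ^ 2 - √2 ^ 2 - 2) * hsqrt
  have htwo : 2 ≤ (‖x - p‖ + √2) ^ 2 := by nlinarith [norm_nonneg (x - p), Real.sqrt_nonneg 2]
  nlinarith [mul_le_mul_of_nonneg_left htwo (sq_nonneg (‖x - p‖ - √2))]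

theorem variance_norm_sub_uniformOnSphere_le {N : ℕ} [NeZero N] {p : EuclideanSpace ℝ (Fin N)}
    (hp : ‖p‖ = 1) :
    Var[fun x => ‖x - p‖; uniformOnSphere N] ≤ 2 / N := by
  have hY : Continuous fun x : EuclideanSpace ℝ (Fin N) => ‖x - p‖ := by fun_prop
  calc Var[fun x => ‖x - p‖; uniformOnSphere N]
      = Var[fun x => ‖x - p‖ - √2; uniformOnSphere N] :=
        (variance_sub_const hY.aestronglyMeasurable _).symm
    _ ≤ ∫ x, (‖x - p‖ - √2) ^ 2 ∂uniformOnSphere N :=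
        variance_le_expectation_sq (by fun_prop)
    _ ≤ ∫ x, 2 * ⟪x, p⟫ ^ 2 ∂uniformOnSphere N :=
        integral_mono_ae (Continuous.integrable_uniformOnSphere (by fun_prop))
          (Continuous.integrable_uniformOnSphere (by fun_prop))
          (ae_mem_sphere_uniformOnSphere.mono fun x hx =>
            sq_norm_sub_sub_sqrt_two_le (mem_sphere_zero_iff_norm.1 hx) hp)
    _ = 2 / N := by rw [integral_const_mul, integral_inner_sq_uniformOnSphere hp]; ring

theorem sphere_chord_mean_limit
    (p : ∀ N : ℕ, EuclideanSpace ℝ (Fin N)) (hp : ∀ N, 2 ≤ N → ‖p N‖ = 1) :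
    Filter.Tendsto
      (fun N : ℕ => 2 ^ (N - 1) * betaFn ((N : ℝ) / 2) ((N : ℝ) / 2) /
        betaFn ((N : ℝ) - 1 / 2) (1 / 2))
      Filter.atTop (nhds (Real.sqrt 2)) ∧
    Filter.Tendsto
      (fun N : ℕ => (∫ x, ‖x - p N‖ ^ 2 ∂(uniformOnSphere N)) -
        (∫ x, ‖x - p N‖ ∂(uniformOnSphere N)) ^ 2)
      Filter.atTop (nhds 0) := by
  refine ⟨tendsto_sphereChordMean, ?_⟩
  have hvar : ∀ᶠ N in atTop, Var[fun x => ‖x - p N‖; uniformOnSphere N] =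
      (∫ x, ‖x - p N‖ ^ 2 ∂uniformOnSphere N) - (∫ x, ‖x - p N‖ ∂uniformOnSphere N) ^ 2 := by
    filter_upwards [eventually_ge_atTop 2] with N hN
    have : NeZero N := ⟨by omega⟩
    exact variance_eq_sub (Continuous.memLp_uniformOnSphere (by fun_prop) 2)
  refine (tendsto_of_tendsto_of_tendsto_of_le_of_le' tendsto_const_nhds
    (tendsto_const_div_atTop_nhds_zero_nat 2) (.of_forall fun N => variance_nonneg _ _) ?_).congr'
    hvar
  filter_upwards [eventually_ge_atTop 2] with N hN
  have : NeZero N := ⟨by omega⟩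
  exact variance_norm_sub_uniformOnSphere_le (hp N hN)
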